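/- Theorem 3.4, product threshold bound: Assume n ≥ 2 and that for each r ∈ {1,…,n} there is a constant C_r ≥ 0 such that ∑_{i=1}^m |Tr(σ^{(r)} a^{(r)}_i)|² ≤ C_r for every state σ^{(r)} on ℂ^{d_r}. Then |Tr(σB)| ≤ ∏_{r=1}^n C_r^{1/2} for every product state σ ∈ 𝒫; in particular Γ_prod(B) ≤ ∏_{r=1}^n C_r^{1/2}. -/

import Mathlib

open scoped BigOperators ComplexOrder

namespace Parity

variable {n : ℕ} {d : Fin n → ℕ}

/-- Kronecker product of `n` matrices, as a matrix over the product index set. -/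
def kron (a : ∀ r : Fin n, Matrix (Fin (d r)) (Fin (d r)) ℂ) :
    Matrix (∀ r, Fin (d r)) (∀ r, Fin (d r)) ℂ :=
  fun i j => ∏ r, a r (i r) (j r)

/-- The ℓ²-operator norm of a complex matrix. -/
noncomputable def opNorm {I : Type*} [Fintype I] [DecidableEq I] (A : Matrix I I ℂ) : ℝ :=
  ‖Matrix.toEuclideanCLM (𝕜 := ℂ) A‖

/-- The defect weight φ⁽ⁿ⁾ᵢⱼ. -/
noncomputable def phi {m : ℕ} (a : ∀ r : Fin n, Fin m → Matrix (Fin (d r)) (Fin (d r)) ℂ)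
    (i j : Fin m) : ℝ :=
  (2 : ℝ) ^ ((1 : ℤ) - n) *
    ∑ S ∈ Finset.univ.filter (fun S : Finset (Fin n) => Even S.card),
      (∏ r ∈ S, opNorm (a r i * a r j - a r j * a r i)) *
        (∏ r ∈ Sᶜ, opNorm (a r i * a r j + a r j * a r i))

/-- A state: positive semidefinite with trace one. -/
def IsState {I : Type*} [Fintype I] (ρ : Matrix I I ℂ) : Prop :=
  ρ.PosSemidef ∧ ρ.trace = 1

/-- The trace norm `Tr √(AᴴA)`. -/
noncomputable def traceNorm {I : Type*} [Fintype I] [DecidableEq I] (A : Matrix I I ℂ) : ℝ :=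
  (((Matrix.posSemidef_conjTranspose_mul_self A).1.eigenvectorUnitary : Matrix I I ℂ) *
      Matrix.diagonal (((↑) : ℝ → ℂ) ∘ (√·) ∘ (Matrix.posSemidef_conjTranspose_mul_self A).1.eigenvalues) *
      (star (Matrix.posSemidef_conjTranspose_mul_self A).1.eigenvectorUnitary : Matrix I I ℂ)).trace.re

/-- Logarithm of a Hermitian matrix via the functional calculus (junk value otherwise);
an eigenvalue `0` contributes `Real.log 0 = 0`. -/
noncomputable def mlog {I : Type*} [Fintype I] [DecidableEq I] (A : Matrix I I ℂ) :
    Matrix I I ℂ :=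
  if hA : A.IsHermitian then
    (hA.eigenvectorUnitary : Matrix I I ℂ) *
      Matrix.diagonal (fun i => (Real.log (hA.eigenvalues i) : ℂ)) *
      (star hA.eigenvectorUnitary : Matrix I I ℂ)
  else 0

/-- Quantum relative entropy `D(ρ‖σ) = Tr(ρ (log ρ − log σ))` (natural logarithm). -/
noncomputable def relEntropy {I : Type*} [Fintype I] [DecidableEq I] (ρ σ : Matrix I I ℂ) : ℝ :=
  (Matrix.trace (ρ * (mlog ρ - mlog σ))).re

/-- The `r`-th marginal (partial trace over all other factors). -/
noncomputable def marginal (ρ : Matrix (∀ r, Fin (d r)) (∀ r, Fin (d r)) ℂ) (r : Fin n) :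
    Matrix (Fin (d r)) (Fin (d r)) ℂ :=
  fun a b => ∑ k : ∀ s, Fin (d s), if k r = a then ρ k (Function.update k r b) else 0

/-- Total correlation `I_tot(ρ) = D(ρ‖ρ₁ ⊗ ⋯ ⊗ ρₙ)`. -/
noncomputable def Itot (ρ : Matrix (∀ r, Fin (d r)) (∀ r, Fin (d r)) ℂ) : ℝ :=
  relEntropy ρ (kron (fun r => marginal ρ r))

/-- The set of product states. -/
def ProdStates (d : Fin n → ℕ) : Set (Matrix (∀ r, Fin (d r)) (∀ r, Fin (d r)) ℂ) :=
  {σ | ∃ s : ∀ r : Fin n, Matrix (Fin (d r)) (Fin (d r)) ℂ,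
    (∀ r, IsState (s r)) ∧ σ = kron s}

/-- The product threshold `Γ_prod(B)`. -/
noncomputable def Gamma (d : Fin n → ℕ) (B : Matrix (∀ r, Fin (d r)) (∀ r, Fin (d r)) ℂ) : ℝ :=
  sSup {x : ℝ | ∃ σ ∈ ProdStates d, x = (Matrix.trace (σ * B)).re}

/-- The excess `Δ_B(ρ)`. -/
noncomputable def excess (d : Fin n → ℕ) (B ρ : Matrix (∀ r, Fin (d r)) (∀ r, Fin (d r)) ℂ) : ℝ :=
  max ((Matrix.trace (ρ * B)).re - Gamma d B) 0

end Parity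

/-!
Expanding the product state gives `Tr(σB) = ∑ᵢ ∏ᵣ Tr(σ⁽ʳ⁾ aᵢ⁽ʳ⁾)`. With at least two sites,
`∑ᵢ ∏ᵣ xᵣ(i) ≤ ∏ᵣ ‖xᵣ‖₂`: Cauchy–Schwarz between one site and the pointwise product of the
others, whose ℓ²-norm is at most the product of theirs. Applied to `xᵣ(i) = |Tr(σ⁽ʳ⁾ aᵢ⁽ʳ⁾)|`,
the site condition bounds each `‖xᵣ‖₂` by `√Cᵣ`.
-/

namespace Parity

variable {n : ℕ} {d : Fin n → ℕ}

theorem kron_mul_kron (s b : ∀ r : Fin n, Matrix (Fin (d r)) (Fin (d r)) ℂ) :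
    kron s * kron b = kron (fun r => s r * b r) := by
  ext i j
  simp only [kron, Matrix.mul_apply, Finset.prod_univ_sum, Fintype.piFinset_univ,
    Finset.prod_mul_distrib]

theorem trace_kron (s : ∀ r : Fin n, Matrix (Fin (d r)) (Fin (d r)) ℂ) :
    (kron s).trace = ∏ r, (s r).trace := by
  simp only [Matrix.trace, Matrix.diag, kron, Finset.prod_univ_sum, Fintype.piFinset_univ]

theorem trace_kron_mul_sum_kron {m : ℕ} (s : ∀ r : Fin n, Matrix (Fin (d r)) (Fin (d r)) ℂ)
    (a : ∀ r : Fin n, Fin m → Matrix (Fin (d r)) (Fin (d r)) ℂ) :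
    (kron s * ∑ i, kron (fun r => a r i)).trace = ∑ i, ∏ r, (s r * a r i).trace := by
  simp only [Matrix.mul_sum, Matrix.trace_sum, kron_mul_kron, trace_kron]

end Parity

namespace Finset

variable {ι κ : Type*}

theorem sum_prod_le_prod_sum (t : Finset ι) {s : Finset κ} (hs : s.Nonempty) (y : κ → ι → ℝ)
    (hy : ∀ k i, 0 ≤ y k i) : ∑ i ∈ t, ∏ k ∈ s, y k i ≤ ∏ k ∈ s, ∑ i ∈ t, y k i := by
  induction hs using Finset.Nonempty.cons_induction with
  | singleton k => simp
  | cons k s hk hs ih =>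
    simp only [prod_cons]
    calc ∑ i ∈ t, y k i * ∏ l ∈ s, y l i
        ≤ ∑ i ∈ t, ∑ j ∈ t, y k i * ∏ l ∈ s, y l j :=
          sum_le_sum fun i hi => single_le_sum (f := fun j => y k i * ∏ l ∈ s, y l j)
            (fun j _ => mul_nonneg (hy k i) (prod_nonneg fun l _ => hy l j)) hi
      _ = (∑ i ∈ t, y k i) * ∑ i ∈ t, ∏ l ∈ s, y l i := sum_mul_sum _ _ _ _ |>.symm
      _ ≤ (∑ i ∈ t, y k i) * ∏ l ∈ s, ∑ i ∈ t, y l i :=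
          mul_le_mul_of_nonneg_left ih (sum_nonneg fun i _ => hy k i)

theorem sum_prod_le_prod_sqrt_sum_sq [Fintype κ] [DecidableEq κ] [Nontrivial κ] (t : Finset ι)
    (x : κ → ι → ℝ) :
    ∑ i ∈ t, ∏ k, x k i ≤ ∏ k, √(∑ i ∈ t, x k i ^ 2) := by
  obtain ⟨k₀⟩ : Nonempty κ := inferInstance
  have hrest : (univ.erase k₀).Nonempty :=
    let ⟨k, hk⟩ := exists_ne k₀; ⟨k, mem_erase.2 ⟨hk, mem_univ k⟩⟩
  refine abs_le_of_sq_le_sq' ?_ (prod_nonneg fun k _ => Real.sqrt_nonneg _) |>.2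
  calc (∑ i ∈ t, ∏ k, x k i) ^ 2
      = (∑ i ∈ t, x k₀ i * ∏ k ∈ univ.erase k₀, x k i) ^ 2 := by
        simp only [fun i => mul_prod_erase univ (x · i) (mem_univ k₀)]
    _ ≤ (∑ i ∈ t, x k₀ i ^ 2) * ∑ i ∈ t, (∏ k ∈ univ.erase k₀, x k i) ^ 2 :=
        sum_mul_sq_le_sq_mul_sq _ _ _
    _ ≤ (∑ i ∈ t, x k₀ i ^ 2) * ∏ k ∈ univ.erase k₀, ∑ i ∈ t, x k i ^ 2 := by
        simp only [← prod_pow]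
        exact mul_le_mul_of_nonneg_left (sum_prod_le_prod_sum t hrest _ fun _ _ => sq_nonneg _)
          (sum_nonneg fun _ _ => sq_nonneg _)
    _ = (∏ k, √(∑ i ∈ t, x k i ^ 2)) ^ 2 := by
        rw [mul_prod_erase univ (fun k => ∑ i ∈ t, x k i ^ 2) (mem_univ k₀), ← prod_pow]
        exact prod_congr rfl fun k _ => (Real.sq_sqrt (sum_nonneg fun _ _ => sq_nonneg _)).symm

theorem norm_sum_prod_le_prod_sqrt_sum_sq [Fintype κ] [DecidableEq κ] [Nontrivial κ]
    (t : Finset ι) (z : κ → ι → ℂ) :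
    ‖∑ i ∈ t, ∏ k, z k i‖ ≤ ∏ k, √(∑ i ∈ t, ‖z k i‖ ^ 2) :=
  calc ‖∑ i ∈ t, ∏ k, z k i‖
      ≤ ∑ i ∈ t, ∏ k, ‖z k i‖ := (norm_sum_le _ _).trans_eq (by simp only [norm_prod])
    _ ≤ ∏ k, √(∑ i ∈ t, ‖z k i‖ ^ 2) :=
        sum_prod_le_prod_sqrt_sum_sq t _

end Finset

open Parity in
theorem product_threshold_bound_general
    {n m : ℕ} {d : Fin n → ℕ} (hn : 2 ≤ n)
    (a : ∀ r : Fin n, Fin m → Matrix (Fin (d r)) (Fin (d r)) ℂ)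
    (C : Fin n → ℝ)
    (hsite : ∀ r, ∀ σ : Matrix (Fin (d r)) (Fin (d r)) ℂ, IsState σ →
      ∑ i : Fin m, ‖Matrix.trace (σ * a r i)‖ ^ 2 ≤ C r) :
    (∀ σ ∈ ProdStates d,
        ‖Matrix.trace (σ * ∑ i : Fin m, kron (fun r => a r i))‖ ≤
          ∏ r : Fin n, Real.sqrt (C r)) ∧
      Gamma d (∑ i : Fin m, kron (fun r => a r i)) ≤ ∏ r : Fin n, Real.sqrt (C r) := by
  have : Nontrivial (Fin n) := Fin.nontrivial_iff_two_le.2 hn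
  have hnorm : ∀ σ ∈ ProdStates d,
      ‖Matrix.trace (σ * ∑ i : Fin m, kron (fun r => a r i))‖ ≤ ∏ r, √(C r) := by
    rintro σ ⟨s, hs, rfl⟩
    rw [trace_kron_mul_sum_kron]
    exact (Finset.norm_sum_prod_le_prod_sqrt_sum_sq _ _).trans <|
      Finset.prod_le_prod (fun r _ => Real.sqrt_nonneg _)
        fun r _ => Real.sqrt_le_sqrt (hsite r (s r) (hs r))
  refine ⟨hnorm, Real.sSup_le ?_ (Finset.prod_nonneg fun r _ => Real.sqrt_nonneg _)⟩
  rintro x ⟨σ, hσ, rfl⟩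
  exact (Complex.re_le_norm _).trans (hnorm σ hσ)

open Parity in
/-- Theorem 3.4: product threshold bound under the ℓ² site condition. -/
theorem product_threshold_bound
    {n m : ℕ} {d : Fin n → ℕ} (hn : 2 ≤ n) (hd : ∀ r, 1 ≤ d r) (hm : 1 ≤ m)
    (a : ∀ r : Fin n, Fin m → Matrix (Fin (d r)) (Fin (d r)) ℂ)
    (ha_sa : ∀ r i, (a r i).IsHermitian)
    (ha_norm : ∀ r i, opNorm (a r i) ≤ 1)
    (C : Fin n → ℝ) (hC : ∀ r, 0 ≤ C r)
    (hsite : ∀ r, ∀ σ : Matrix (Fin (d r)) (Fin (d r)) ℂ, IsState σ →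
      ∑ i : Fin m, ‖Matrix.trace (σ * a r i)‖ ^ 2 ≤ C r) :
    (∀ σ ∈ ProdStates d,
        ‖Matrix.trace (σ * ∑ i : Fin m, kron (fun r => a r i))‖ ≤
          ∏ r : Fin n, Real.sqrt (C r)) ∧
      Gamma d (∑ i : Fin m, kron (fun r => a r i)) ≤ ∏ r : Fin n, Real.sqrt (C r) :=
  product_threshold_bound_general hn a C hsite
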